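/- arXiv:0804.0693 — 3 statements merged into one kernel-verified Lean document; each statement's English description precedes it below -/
import Mathlib

section
/- Let g(u) = u^2 - 2au + λ|u|^γ for u ∈ ℝ, where a ≠ 0, λ ≥ 0 and 0 < γ < 1, and let c_γ = (2/(2-γ)) · (2(1-γ)/(2-γ))^{1-γ}. Then 0 is the unique global minimizer of g over ℝ if and only if λ > c_γ |a|^{2-γ}. -/
/-!
For `u ≠ 0`, `g u - g 0 = |u| ^ γ * (λ - |u| ^ (1 - γ) * (2 * a * u / |u| - |u|))`, and the worst
sign of `u` is that of `a`. So `0` is the unique minimizer iff `λ` strictly exceeds every value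
of `v ^ p * (2 * |a| - v)`, `v > 0`, `p = 1 - γ`. By weighted AM-GM this function attains its
maximum `(2 * p * |a| / (p + 1)) ^ p * (2 * |a| / (p + 1)) = c_γ * |a| ^ (2 - γ)` at
`v = 2 * p * |a| / (p + 1)`.
-/

open Real Set

lemma rpow_mul_sub_le {p m u : ℝ} (hp : 0 < p) (hm : 0 < m) (hu : 0 ≤ u) :
    u ^ p * (m - u) ≤ (p * m / (p + 1)) ^ p * (m / (p + 1)) := by
  set x := p * m / (p + 1)
  set y := m / (p + 1)
  have hx : 0 < x := by positivity
  have hy : 0 < y := by positivity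
  rcases le_or_gt m u with hmu | hum
  · exact (mul_nonpos_of_nonneg_of_nonpos (by positivity) (by linarith)).trans (by positivity)
  -- weighted AM-GM for `u / x` and `(m - u) / y` with weights `p / (p + 1)`, `1 / (p + 1)`
  have hmean : ((u / x) ^ p * ((m - u) / y)) ^ (p + 1)⁻¹ ≤ 1 := calc
    ((u / x) ^ p * ((m - u) / y)) ^ (p + 1)⁻¹
        = (u / x) ^ (p / (p + 1)) * ((m - u) / y) ^ (1 / (p + 1)) := by
      rw [mul_rpow (by positivity) (by positivity), ← rpow_mul (by positivity)]
      ring_nf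
    _ ≤ p / (p + 1) * (u / x) + 1 / (p + 1) * ((m - u) / y) :=
      geom_mean_le_arith_mean2_weighted (by positivity) (by positivity) (by positivity)
        (by linarith [div_pos (sub_pos.2 hum) hy]) (by field_simp)
    _ = 1 := by simp only [x, y]; field_simp; ring
  have hprod : (u / x) ^ p * ((m - u) / y) ≤ 1 := by
    simpa using (rpow_inv_le_iff_of_pos (by positivity) zero_le_one (by linarith)).1 hmean
  calc u ^ p * (m - u) = (u / x) ^ p * ((m - u) / y) * (x ^ p * y) := by
        rw [div_rpow hu hx.le]; field_simp
    _ ≤ x ^ p * y := mul_le_of_le_one_left (by positivity) hprod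

lemma isGreatest_rpow_mul_sub {p m : ℝ} (hp : 0 < p) (hm : 0 < m) :
    IsGreatest ((fun v => v ^ p * (m - v)) '' Ioi 0) ((p * m / (p + 1)) ^ p * (m / (p + 1))) := by
  refine ⟨⟨p * m / (p + 1), by simp only [mem_Ioi]; positivity, ?_⟩, ?_⟩
  · field_simp
    ring
  · rintro _ ⟨v, hv, rfl⟩
    exact rpow_mul_sub_le hp hm hv.le

lemma rpow_mul_sub_max_eq {p b : ℝ} (hp : 0 ≤ p) (hb : 0 ≤ b) :
    (p * (2 * b) / (p + 1)) ^ p * (2 * b / (p + 1)) =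
      2 / (p + 1) * (2 * p / (p + 1)) ^ p * b ^ (p + 1) := by
  rw [show p * (2 * b) / (p + 1) = 2 * p / (p + 1) * b by ring,
    mul_rpow (by positivity) hb, rpow_add' hb (by positivity), rpow_one]
  ring

lemma sq_sub_add_rpow_pos_iff {b lam gamma v : ℝ} (hv : 0 < v) :
    0 < v ^ 2 - 2 * b * v + lam * v ^ gamma ↔ v ^ (1 - gamma) * (2 * b - v) < lam := by
  have hsplit : v ^ 2 - 2 * b * v + lam * v ^ gamma =
      v ^ gamma * (lam - v ^ (1 - gamma) * (2 * b - v)) := by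
    have hv1 : v ^ gamma * v ^ (1 - gamma) = v := by
      rw [← rpow_add hv, add_sub_cancel, rpow_one]
    linear_combination (2 * b - v) * hv1
  rw [hsplit, mul_pos_iff_of_pos_left (by positivity), sub_pos]

lemma forall_ne_zero_sq_sub_add_rpow_pos_iff (a lam gamma : ℝ) :
    (∀ u : ℝ, u ≠ 0 → 0 < u ^ 2 - 2 * a * u + lam * |u| ^ gamma) ↔
      ∀ v : ℝ, 0 < v → 0 < v ^ 2 - 2 * |a| * v + lam * v ^ gamma := by
  constructor
  · intro h v hv
    rcases abs_choice a with ha | ha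
    · simpa [ha, abs_of_pos hv] using h v hv.ne'
    · simpa [ha, abs_of_pos hv] using h (-v) (neg_ne_zero.2 hv.ne')
  · intro h u hu
    have hau : a * u ≤ |a| * |u| := abs_mul a u ▸ le_abs_self (a * u)
    have := h |u| (abs_pos.2 hu)
    rw [sq_abs] at this
    linarith

theorem bridge_univariate_zero_unique_min_iff_general
    (a lam gamma : ℝ) (ha : a ≠ 0)
    (hgamma0 : 0 < gamma) (hgamma1 : gamma < 1)
    (g : ℝ → ℝ) (hg : ∀ u : ℝ, g u = u ^ 2 - 2 * a * u + lam * |u| ^ gamma)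
    (c : ℝ)
    (hc : c = (2 / (2 - gamma)) * (2 * (1 - gamma) / (2 - gamma)) ^ (1 - gamma)) :
    (∀ u : ℝ, u ≠ 0 → g 0 < g u) ↔ lam > c * |a| ^ (2 - gamma) := by
  have hg0 : g 0 = 0 := by simp [hg, zero_rpow hgamma0.ne']
  have hc' : c * |a| ^ (2 - gamma) =
      ((1 - gamma) * (2 * |a|) / (1 - gamma + 1)) ^ (1 - gamma) * (2 * |a| / (1 - gamma + 1)) := by
    rw [rpow_mul_sub_max_eq (by linarith) (abs_nonneg a), hc, show 1 - gamma + 1 = 2 - gamma by ring]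
  calc (∀ u : ℝ, u ≠ 0 → g 0 < g u)
      ↔ ∀ v : ℝ, 0 < v → 0 < v ^ 2 - 2 * |a| * v + lam * v ^ gamma := by
        simpa only [hg0, hg] using forall_ne_zero_sq_sub_add_rpow_pos_iff a lam gamma
    _ ↔ ∀ v ∈ Ioi (0 : ℝ), v ^ (1 - gamma) * (2 * |a| - v) < lam :=
        forall₂_congr fun _ hv => sq_sub_add_rpow_pos_iff hv
    _ ↔ lam > c * |a| ^ (2 - gamma) := by
        rw [gt_iff_lt, hc', (isGreatest_rpow_mul_sub (by linarith) (mul_pos two_pos (abs_pos.2 ha))).lt_iff,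
          forall_mem_image]

/-- Lemma 3 (Knight and Fu (2000)): for `g(u) = u² - 2au + λ|u|^γ` with `a ≠ 0`,
`λ ≥ 0` and `0 < γ < 1`, the point `0` is the unique global minimizer of `g`
over `ℝ` if and only if `λ > c_γ |a|^(2-γ)`, where
`c_γ = (2/(2-γ)) (2(1-γ)/(2-γ))^(1-γ)`. -/
theorem bridge_univariate_zero_unique_min_iff
    (a lam gamma : ℝ) (ha : a ≠ 0) (hlam : 0 ≤ lam)
    (hgamma0 : 0 < gamma) (hgamma1 : gamma < 1)
    (g : ℝ → ℝ) (hg : ∀ u : ℝ, g u = u ^ 2 - 2 * a * u + lam * |u| ^ gamma)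
    (c : ℝ)
    (hc : c = (2 / (2 - gamma)) * (2 * (1 - gamma) / (2 - gamma)) ^ (1 - gamma)) :
    (∀ u : ℝ, u ≠ 0 → g 0 < g u) ↔ lam > c * |a| ^ (2 - gamma) :=
  bridge_univariate_zero_unique_min_iff_general a lam gamma ha hgamma0 hgamma1 g hg c hc
end

section
/- Consider the linear model Y_i = x_i' β_0 + ε_i, i = 1, …, n, where x_1, …, x_n ∈ ℝ^p are fixed, ε_1, …, ε_n are independent real random variables with mean zero and variance σ^2 ∈ (0, ∞), and Σ_n = n^{-1} Σ_{i=1}^n x_i x_i' is positive definite. Let β̂ be any (measurable) global minimizer of the bridge objective L(β) = Σ_{i=1}^n (Y_i − x_i' β)^2 + λ Σ_{j=1}^p |β_j|^γ with λ ≥ 0 and γ > 0, and let η = λ Σ_{j=1}^p |β_{0j}|^γ. Then n · E[ (β̂ − β_0)' Σ_n (β̂ − β_0) ] ≤ 6 σ^2 p + 3 η. -/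
/-!
Write `X` for the design matrix, `e` for the error vector and `P = X (XᵀX)⁻¹ Xᵀ` for the hat
matrix, and let `t = X (β̂ - β₀)`. Comparing the objective at `β̂` with its value at `β₀` and
dropping the nonnegative penalty at `β̂` gives the basic inequality `‖t‖² ≤ 2 ⟨e, t⟩ + η`.
Since `t` lies in the column space of `X`, `⟨e, t⟩ = ⟨P e, t⟩ ≤ ‖P e‖ ‖t‖`, and solving the
resulting quadratic inequality in `‖t‖` yields `‖t‖² ≤ 4 ‖P e‖² + 2 η`. Finally
`E ‖P e‖² = σ² tr P = σ² p`, while `‖t‖² = n (β̂ - β₀)' Σₙ (β̂ - β₀)`.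
-/

open MeasureTheory ProbabilityTheory Matrix

theorem le_four_mul_add_two_mul_of_sq_le {s c r η : ℝ} (hr : 0 ≤ r) (hη : 0 ≤ η)
    (hs : s ≤ 2 * c + η) (hc : c ^ 2 ≤ r * s) : s ≤ 4 * r + 2 * η := by
  rcases le_or_gt s η with hsη | hsη
  · linarith
  nlinarith [mul_self_le_mul_self (sub_pos.2 hsη).le (show s - η ≤ 2 * c by linarith)]

namespace Matrix

variable {ι κ : Type*} [Fintype ι] [Fintype κ]

theorem sq_dotProduct_le_dotProduct_self_mul (u v : ι → ℝ) :
    (u ⬝ᵥ v) ^ 2 ≤ (u ⬝ᵥ u) * (v ⬝ᵥ v) := by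
  simpa only [dotProduct, sq] using Finset.sum_mul_sq_le_sq_mul_sq Finset.univ u v

theorem dotProduct_self_nonneg (v : ι → ℝ) : 0 ≤ v ⬝ᵥ v := by
  simpa only [star_trivial] using dotProduct_star_self_nonneg v

theorem dotProduct_transpose_mul_mulVec (X : Matrix ι κ ℝ) (d : κ → ℝ) :
    d ⬝ᵥ (Xᵀ * X) *ᵥ d = X *ᵥ d ⬝ᵥ X *ᵥ d := by
  rw [← mulVec_mulVec, dotProduct_mulVec, vecMul_transpose]

theorem dotProduct_mulVec_eq_sum (Q : Matrix ι ι ℝ) (e : ι → ℝ) :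
    e ⬝ᵥ Q *ᵥ e = ∑ i, ∑ j, e i * Q i j * e j := by
  simp only [dotProduct, mulVec, Finset.mul_sum, mul_assoc]

theorem mul_sum_sum_eq_dotProduct_of_eq_inv_smul {X : Matrix ι κ ℝ} {S : Matrix κ κ ℝ} {c : ℝ}
    (hc : c ≠ 0) (hS : S = c⁻¹ • (Xᵀ * X)) (d : κ → ℝ) :
    c * ∑ a, ∑ b, d a * S a b * d b = X *ᵥ d ⬝ᵥ X *ᵥ d := by
  rw [← dotProduct_mulVec_eq_sum, hS, smul_mulVec, dotProduct_smul, smul_eq_mul,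
    mul_inv_cancel_left₀ hc, dotProduct_transpose_mul_mulVec]

theorem isUnit_det_of_posDef_smul {A : Matrix ι ι ℝ} [DecidableEq ι] {c : ℝ}
    (hA : (c • A).PosDef) : IsUnit A.det := by
  have h := hA.det_pos
  rw [det_smul] at h
  exact (right_ne_zero_of_mul h.ne').isUnit

variable [DecidableEq κ]

/-- The orthogonal projection onto the column space of `X` when `XᵀX` is invertible. -/
noncomputable def hatMatrix (X : Matrix ι κ ℝ) : Matrix ι ι ℝ := X * (Xᵀ * X)⁻¹ * Xᵀ

variable {X : Matrix ι κ ℝ}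

theorem transpose_hatMatrix (X : Matrix ι κ ℝ) : (hatMatrix X)ᵀ = hatMatrix X := by
  simp only [hatMatrix, transpose_mul, transpose_transpose, transpose_nonsing_inv,
    Matrix.mul_assoc]

theorem hatMatrix_mul (h : IsUnit (Xᵀ * X).det) : hatMatrix X * X = X := by
  rw [hatMatrix, Matrix.mul_assoc, Matrix.mul_assoc, nonsing_inv_mul _ h, Matrix.mul_one]

theorem hatMatrix_mul_hatMatrix (h : IsUnit (Xᵀ * X).det) :
    hatMatrix X * hatMatrix X = hatMatrix X := by
  calc hatMatrix X * hatMatrix X = hatMatrix X * X * (Xᵀ * X)⁻¹ * Xᵀ := by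
        simp only [hatMatrix, Matrix.mul_assoc]
    _ = hatMatrix X := by rw [hatMatrix_mul h, hatMatrix]

theorem trace_hatMatrix (h : IsUnit (Xᵀ * X).det) : (hatMatrix X).trace = Fintype.card κ := by
  rw [hatMatrix, Matrix.mul_assoc, trace_mul_comm, Matrix.mul_assoc, nonsing_inv_mul _ h,
    trace_one]

theorem dotProduct_hatMatrix_mulVec_self (h : IsUnit (Xᵀ * X).det) (e : ι → ℝ) :
    e ⬝ᵥ hatMatrix X *ᵥ e = hatMatrix X *ᵥ e ⬝ᵥ hatMatrix X *ᵥ e := by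
  rw [dotProduct_mulVec (hatMatrix X *ᵥ e), ← mulVec_transpose, transpose_hatMatrix,
    mulVec_mulVec, hatMatrix_mul_hatMatrix h, dotProduct_comm]

theorem dotProduct_hatMatrix_mulVec_self_nonneg (h : IsUnit (Xᵀ * X).det) (e : ι → ℝ) :
    0 ≤ e ⬝ᵥ hatMatrix X *ᵥ e := by
  rw [dotProduct_hatMatrix_mulVec_self h]
  exact dotProduct_self_nonneg _

theorem sq_dotProduct_mulVec_le (h : IsUnit (Xᵀ * X).det) (e : ι → ℝ) (d : κ → ℝ) :
    (e ⬝ᵥ X *ᵥ d) ^ 2 ≤ (e ⬝ᵥ hatMatrix X *ᵥ e) * (X *ᵥ d ⬝ᵥ X *ᵥ d) := by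
  have hproj : e ⬝ᵥ X *ᵥ d = hatMatrix X *ᵥ e ⬝ᵥ X *ᵥ d := by
    conv_lhs => rw [← hatMatrix_mul h, ← mulVec_mulVec, dotProduct_mulVec, ← mulVec_transpose,
      transpose_hatMatrix]
  rw [hproj, dotProduct_hatMatrix_mulVec_self h]
  exact sq_dotProduct_le_dotProduct_self_mul _ _

end Matrix

section PenalizedLeastSquares

variable {ι κ : Type*} [Fintype ι] [Fintype κ] {X : Matrix ι κ ℝ} {β₀ β : κ → ℝ} {e : ι → ℝ}
  {pen pen₀ : ℝ}

theorem mul_sum_abs_rpow_nonneg {lam : ℝ} (hlam : 0 ≤ lam) (β : κ → ℝ) (γ : ℝ) :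
    0 ≤ lam * ∑ j, |β j| ^ γ :=
  mul_nonneg hlam (Finset.sum_nonneg fun _ _ => Real.rpow_nonneg (abs_nonneg _) _)

theorem basic_inequality_of_penalized_min (hpen : 0 ≤ pen)
    (hmin : (X *ᵥ β₀ + e - X *ᵥ β) ⬝ᵥ (X *ᵥ β₀ + e - X *ᵥ β) + pen ≤ e ⬝ᵥ e + pen₀) :
    X *ᵥ (β - β₀) ⬝ᵥ X *ᵥ (β - β₀) ≤ 2 * (e ⬝ᵥ X *ᵥ (β - β₀)) + pen₀ := by
  have hres : X *ᵥ β₀ + e - X *ᵥ β = e - X *ᵥ (β - β₀) := by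
    rw [mulVec_sub]; abel
  rw [hres] at hmin
  simp only [sub_dotProduct, dotProduct_sub, dotProduct_comm (X *ᵥ (β - β₀)) e] at hmin
  linarith

theorem prediction_error_le_of_penalized_min [DecidableEq κ] (hX : IsUnit (Xᵀ * X).det)
    (hpen : 0 ≤ pen) (hpen₀ : 0 ≤ pen₀)
    (hmin : (X *ᵥ β₀ + e - X *ᵥ β) ⬝ᵥ (X *ᵥ β₀ + e - X *ᵥ β) + pen ≤ e ⬝ᵥ e + pen₀) :
    X *ᵥ (β - β₀) ⬝ᵥ X *ᵥ (β - β₀) ≤ 4 * (e ⬝ᵥ hatMatrix X *ᵥ e) + 2 * pen₀ :=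
  le_four_mul_add_two_mul_of_sq_le (dotProduct_hatMatrix_mulVec_self_nonneg hX e) hpen₀
    (basic_inequality_of_penalized_min hpen hmin) (sq_dotProduct_mulVec_le hX e _)

end PenalizedLeastSquares

section QuadraticFormOfErrors

variable {Ω ι : Type*} [MeasurableSpace Ω] {μ : Measure Ω} {ε : ι → Ω → ℝ}

theorem memLp_two_of_integral_sq_ne_zero {f : Ω → ℝ} (hf : AEStronglyMeasurable f μ)
    (h : ∫ ω, f ω ^ 2 ∂μ ≠ 0) : MemLp f 2 μ :=
  (memLp_two_iff_integrable_sq hf).2 (Integrable.of_integral_ne_zero h)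

theorem integrable_mul_of_integral_sq_eq {σ : ℝ} (hσ : σ ≠ 0)
    (hmeas : ∀ i, AEStronglyMeasurable (ε i) μ) (hvar : ∀ i, ∫ ω, ε i ω ^ 2 ∂μ = σ ^ 2)
    (i j : ι) : Integrable (fun ω => ε i ω * ε j ω) μ :=
  have hL2 (k : ι) : MemLp (ε k) 2 μ :=
    memLp_two_of_integral_sq_ne_zero (hmeas k) (by rw [hvar]; positivity)
  (hL2 i).integrable_mul (hL2 j)

theorem integral_mul_eq_ite_of_iIndepFun [DecidableEq ι] {σ : ℝ}
    (hmeas : ∀ i, AEStronglyMeasurable (ε i) μ) (hindep : iIndepFun ε μ)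
    (hmean : ∀ i, ∫ ω, ε i ω ∂μ = 0) (hvar : ∀ i, ∫ ω, ε i ω ^ 2 ∂μ = σ ^ 2) (i j : ι) :
    ∫ ω, ε i ω * ε j ω ∂μ = if i = j then σ ^ 2 else 0 := by
  split_ifs with hij
  · subst hij
    simpa only [sq] using hvar i
  · have h := (hindep.indepFun hij).integral_mul_eq_mul_integral (hmeas i) (hmeas j)
    rwa [hmean i, zero_mul] at h

variable [Fintype ι]

theorem integrable_dotProduct_mulVec (hint : ∀ i j, Integrable (fun ω => ε i ω * ε j ω) μ)
    (Q : Matrix ι ι ℝ) : Integrable (fun ω => (fun i => ε i ω) ⬝ᵥ Q *ᵥ fun i => ε i ω) μ := by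
  simp only [dotProduct_mulVec_eq_sum, mul_comm _ (Q _ _), mul_assoc]
  exact integrable_finsetSum _ fun i _ => integrable_finsetSum _ fun j _ =>
    (hint i j).const_mul _

theorem integral_dotProduct_mulVec [DecidableEq ι] {σ : ℝ}
    (hint : ∀ i j, Integrable (fun ω => ε i ω * ε j ω) μ)
    (hcov : ∀ i j, ∫ ω, ε i ω * ε j ω ∂μ = if i = j then σ ^ 2 else 0) (Q : Matrix ι ι ℝ) :
    ∫ ω, (fun i => ε i ω) ⬝ᵥ Q *ᵥ (fun i => ε i ω) ∂μ = σ ^ 2 * Q.trace := by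
  have hterm (i j : ι) : Integrable (fun ω => Q i j * (ε i ω * ε j ω)) μ :=
    (hint i j).const_mul _
  have hcomm (i j : ι) (ω : Ω) : ε i ω * Q i j * ε j ω = Q i j * (ε i ω * ε j ω) := by ring
  simp only [dotProduct_mulVec_eq_sum, hcomm]
  rw [integral_finsetSum Finset.univ fun i _ =>
    integrable_finsetSum Finset.univ fun j _ => hterm i j]
  simp only [integral_finsetSum Finset.univ fun j _ => hterm _ j, integral_const_mul, hcov,
    mul_ite, mul_zero, Finset.sum_ite_eq, Finset.mem_univ, if_true, trace, diag, Finset.mul_sum]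
  exact Finset.sum_congr rfl fun i _ => mul_comm _ _

end QuadraticFormOfErrors

theorem bridge_quadratic_risk_bound_general
    {Ω : Type*} [MeasurableSpace Ω] (μ : Measure Ω) [IsProbabilityMeasure μ]
    (n p : ℕ)
    (ε : Fin n → Ω → ℝ) (σ : ℝ) (hσ : 0 < σ)
    (hmeas : ∀ i, Measurable (ε i))
    (hindep : iIndepFun ε μ)
    (hmean : ∀ i, ∫ ω, ε i ω ∂μ = 0)
    (hvar : ∀ i, ∫ ω, (ε i ω) ^ 2 ∂μ = σ ^ 2)
    (x : Fin n → Fin p → ℝ)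
    (Sn : Matrix (Fin p) (Fin p) ℝ)
    (hSn : ∀ a b, Sn a b = (n : ℝ)⁻¹ * ∑ i, x i a * x i b)
    (hSpos : Sn.PosDef)
    (β0 : Fin p → ℝ) (lam gamma : ℝ) (hlam : 0 ≤ lam)
    (Y : Fin n → Ω → ℝ)
    (hY : ∀ i ω, Y i ω = (∑ j, x i j * β0 j) + ε i ω)
    (βhat : Ω → Fin p → ℝ)
    (hβmin : ∀ᵐ ω ∂μ, ∀ β : Fin p → ℝ,
      (∑ i, (Y i ω - ∑ j, x i j * βhat ω j) ^ 2 + lam * ∑ j, |βhat ω j| ^ gamma)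
        ≤ ∑ i, (Y i ω - ∑ j, x i j * β j) ^ 2 + lam * ∑ j, |β j| ^ gamma)
    (η : ℝ) (hη : η = lam * ∑ j, |β0 j| ^ gamma) :
    (n : ℝ) * ∫ ω, (∑ a, ∑ b, (βhat ω a - β0 a) * Sn a b * (βhat ω b - β0 b)) ∂μ
      ≤ 6 * σ ^ 2 * p + 3 * η := by
  have hpen (β : Fin p → ℝ) := mul_sum_abs_rpow_nonneg hlam β gamma
  have hη0 : 0 ≤ η := hη ▸ hpen β0
  rcases Nat.eq_zero_or_pos n with rfl | hn
  · simp only [CharP.cast_eq_zero, zero_mul]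
    positivity
  set X : Matrix (Fin n) (Fin p) ℝ := Matrix.of x
  set e : Ω → Fin n → ℝ := fun ω i => ε i ω
  set q : Ω → ℝ := fun ω => e ω ⬝ᵥ hatMatrix X *ᵥ e ω
  have hSX : Sn = (n : ℝ)⁻¹ • (Xᵀ * X) := by
    ext a b
    exact hSn a b
  have hX : IsUnit (Xᵀ * X).det := isUnit_det_of_posDef_smul (hSX ▸ hSpos)
  have hquad (ω : Ω) : (n : ℝ) * ∑ a, ∑ b, (βhat ω a - β0 a) * Sn a b * (βhat ω b - β0 b)
      = X *ᵥ (βhat ω - β0) ⬝ᵥ X *ᵥ (βhat ω - β0) :=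
    mul_sum_sum_eq_dotProduct_of_eq_inv_smul (by positivity) hSX _
  have hpt : ∀ᵐ ω ∂μ, (n : ℝ) * ∑ a, ∑ b, (βhat ω a - β0 a) * Sn a b * (βhat ω b - β0 b)
      ≤ 4 * q ω + 2 * η := by
    filter_upwards [hβmin] with ω hω
    rw [hquad ω, hη]
    refine prediction_error_le_of_penalized_min hX (hpen (βhat ω)) (hpen β0) ?_
    convert hω β0 using 2 <;>
      simp only [dotProduct, ← sq, Pi.sub_apply, Pi.add_apply, hY, add_sub_cancel_left] <;> rfl
  have hmeas' (i : Fin n) : AEStronglyMeasurable (ε i) μ := (hmeas i).aestronglyMeasurable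
  have hint := integrable_mul_of_integral_sq_eq hσ.ne' hmeas' hvar
  have hq : Integrable q μ := integrable_dotProduct_mulVec hint _
  have hEq : ∫ ω, q ω ∂μ = σ ^ 2 * p := by
    rw [integral_dotProduct_mulVec hint (integral_mul_eq_ite_of_iIndepFun hmeas' hindep hmean hvar),
      trace_hatMatrix hX, Fintype.card_fin]
  rw [← integral_const_mul]
  calc _ ≤ ∫ ω, 4 * q ω + 2 * η ∂μ := integral_mono_of_nonneg
        (ae_of_all _ fun ω => by simpa only [Pi.zero_apply, hquad ω] using dotProduct_self_nonneg _)
        ((hq.const_mul 4).add (integrable_const _)) hpt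
    _ = 4 * (σ ^ 2 * p) + 2 * η := by
        rw [integral_add (hq.const_mul 4) (integrable_const _), integral_const_mul, hEq,
          integral_const, probReal_univ, one_smul]
    _ ≤ 6 * σ ^ 2 * p + 3 * η := by
        nlinarith [mul_nonneg (sq_nonneg σ) (Nat.cast_nonneg p : (0 : ℝ) ≤ p)]

/-- Inequality (9): in the linear model `Yᵢ = xᵢ'β₀ + εᵢ` with independent errors of
mean zero and variance `σ²` and positive definite Gram matrix `Σₙ = n⁻¹ ∑ᵢ xᵢxᵢ'`,
any global minimizer `β̂` of the bridge objective
`L(β) = ∑ᵢ (Yᵢ − xᵢ'β)² + λ ∑ⱼ |βⱼ|^γ` satisfies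
`n E[(β̂ − β₀)' Σₙ (β̂ − β₀)] ≤ 6σ²p + 3η` where `η = λ ∑ⱼ |β₀ⱼ|^γ`. -/
theorem bridge_quadratic_risk_bound
    {Ω : Type*} [MeasurableSpace Ω] (μ : Measure Ω) [IsProbabilityMeasure μ]
    (n p : ℕ) (hn : 0 < n)
    (ε : Fin n → Ω → ℝ) (σ : ℝ) (hσ : 0 < σ)
    (hmeas : ∀ i, Measurable (ε i))
    (hindep : iIndepFun ε μ)
    (hmean : ∀ i, ∫ ω, ε i ω ∂μ = 0)
    (hvar : ∀ i, ∫ ω, (ε i ω) ^ 2 ∂μ = σ ^ 2)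
    (x : Fin n → Fin p → ℝ)
    (Sn : Matrix (Fin p) (Fin p) ℝ)
    (hSn : ∀ a b, Sn a b = (n : ℝ)⁻¹ * ∑ i, x i a * x i b)
    (hSpos : Sn.PosDef)
    (β0 : Fin p → ℝ) (lam gamma : ℝ) (hlam : 0 ≤ lam) (hgamma : 0 < gamma)
    (Y : Fin n → Ω → ℝ)
    (hY : ∀ i ω, Y i ω = (∑ j, x i j * β0 j) + ε i ω)
    (βhat : Ω → Fin p → ℝ)
    (hβmeas : Measurable βhat)
    (hβmin : ∀ᵐ ω ∂μ, ∀ β : Fin p → ℝ,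
      (∑ i, (Y i ω - ∑ j, x i j * βhat ω j) ^ 2 + lam * ∑ j, |βhat ω j| ^ gamma)
        ≤ ∑ i, (Y i ω - ∑ j, x i j * β j) ^ 2 + lam * ∑ j, |β j| ^ gamma)
    (η : ℝ) (hη : η = lam * ∑ j, |β0 j| ^ gamma) :
    (n : ℝ) * ∫ ω, (∑ a, ∑ b, (βhat ω a - β0 a) * Sn a b * (βhat ω b - β0 b)) ∂μ
      ≤ 6 * σ ^ 2 * p + 3 * η :=
  bridge_quadratic_risk_bound_general μ n p ε σ hσ hmeas hindep hmean hvar x Sn hSn hSpos β0 lam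
    gamma hlam Y hY βhat hβmin η hη
end

section
/- (Theorem 3, nonzero-coefficient part.) Under conditions (B1)–(B4) and 0 < γ < 1, the marginal bridge estimator β̃_n, a measurable global minimizer of U_n(β) = Σ_{j=1}^{p_n} Σ_{i=1}^n (Y_i − x_{ij} β_j)^2 + λ_n Σ_{j=1}^{p_n} |β_j|^γ, satisfies P( β̃_{nk} ≠ 0 for every k ∈ K_n ) → 1 as n → ∞, where K_n = {1, …, k_n} is the index set of the nonzero coefficients. -/
open MeasureTheory ProbabilityTheory Filter
open scoped ENNReal

/-!
If `β̃ₙⱼ = 0` for some `j ∈ Kₙ`, minimality of the separable objective `Uₙ` in the `j`-th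
coordinate alone, tested at `t = ±ξ₀/2`, gives `ξ₀ |∑ᵢ Yᵢ xᵢⱼ| ≤ n ξ₀²/4 + λₙ (ξ₀/2)^γ`.
Since `∑ᵢ Yᵢ xᵢⱼ = n ξₙⱼ + ∑ᵢ xᵢⱼ εᵢ` and `|ξₙⱼ| ≥ ξ₀`, once `λₙ (ξ₀/2)^γ < n ξ₀²/4` (eventually
true as `λₙ/n → 0`) this forces `|∑ᵢ xᵢⱼ εᵢ| ≥ n ξ₀/2`, an event of probability at most
`4σ²/(n ξ₀²)` by Chebyshev. A union bound over `Kₙ` leaves `4σ² kₙ/(n ξ₀²)`, which tends to zero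
because (B3) forces `kₙ^{2-γ} ≤ λₙ n^{-γ/2}` eventually, hence `(kₙ/n)^{2-γ} ≤ λₙ/n → 0`.
-/

theorem apply_le_of_forall_sum_apply_le {ι M : Type*} [Fintype ι] [DecidableEq ι] {α : ι → Type*}
    [AddCommMonoid M] [PartialOrder M] [IsOrderedCancelAddMonoid M]
    (f : ∀ i, α i → M) {b : ∀ i, α i} (hb : ∀ β : ∀ i, α i, ∑ i, f i (b i) ≤ ∑ i, f i (β i))
    (i : ι) (t : α i) : f i (b i) ≤ f i t := by
  have h := hb (Function.update b i t)
  simp only [Function.apply_update f b i t] at h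
  rw [Finset.sum_update_of_mem (Finset.mem_univ i),
    Finset.sum_eq_add_sum_sdiff_singleton_of_mem (Finset.mem_univ i)] at h
  exact le_of_add_le_add_right h

section MarginalBridge

variable {m ι : Type*} [Fintype m] (x : m → ι → ℝ) (Y : m → ℝ) (lam γ : ℝ)

noncomputable def marginalBridgeLoss (j : ι) (t : ℝ) : ℝ :=
  ∑ i, (Y i - x i j * t) ^ 2 + lam * |t| ^ γ

theorem sum_marginalBridgeLoss [Fintype ι] (β : ι → ℝ) :
    ∑ j, marginalBridgeLoss x Y lam γ j (β j)
      = ∑ j, ∑ i, (Y i - x i j * β j) ^ 2 + lam * ∑ j, |β j| ^ γ := by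
  simp only [marginalBridgeLoss, Finset.sum_add_distrib, Finset.mul_sum]

theorem marginalBridgeLoss_eq (j : ι) (t : ℝ) :
    marginalBridgeLoss x Y lam γ j t
      = ∑ i, Y i ^ 2 - 2 * t * ∑ i, Y i * x i j + t ^ 2 * ∑ i, x i j ^ 2 + lam * |t| ^ γ := by
  simp only [marginalBridgeLoss, Finset.mul_sum, ← Finset.sum_sub_distrib,
    ← Finset.sum_add_distrib]
  congr 1
  exact Finset.sum_congr rfl fun i _ => by ring

variable {x Y lam γ}

theorem two_mul_abs_sum_le_of_marginalBridgeLoss_zero_le {j : ι}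
    (h : ∀ t, marginalBridgeLoss x Y lam γ j 0 ≤ marginalBridgeLoss x Y lam γ j t)
    (hγ : γ ≠ 0) {c : ℝ} (hc : 0 ≤ c) :
    2 * c * |∑ i, Y i * x i j| ≤ c ^ 2 * ∑ i, x i j ^ 2 + lam * c ^ γ := by
  have hpos := h c
  have hneg := h (-c)
  simp only [marginalBridgeLoss_eq, abs_neg, abs_of_nonneg hc, abs_zero,
    Real.zero_rpow hγ] at hpos hneg
  rcases abs_cases (∑ i, Y i * x i j) with ⟨hS, -⟩ | ⟨hS, -⟩ <;> rw [hS] <;> linarith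

theorem ne_zero_of_forall_sum_marginalBridgeLoss_le [Fintype ι] [DecidableEq ι] {b : ι → ℝ}
    (hb : ∀ β : ι → ℝ, ∑ j, marginalBridgeLoss x Y lam γ j (b j)
      ≤ ∑ j, marginalBridgeLoss x Y lam γ j (β j))
    (hγ : γ ≠ 0) {j : ι} {c : ℝ} (hc : 0 ≤ c)
    (hcorr : lam * c ^ γ < c * (2 * |∑ i, Y i * x i j| - c * ∑ i, x i j ^ 2)) :
    b j ≠ 0 := by
  intro hbj
  have hmin := apply_le_of_forall_sum_apply_le (marginalBridgeLoss x Y lam γ) hb j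
  rw [hbj] at hmin
  have := two_mul_abs_sum_le_of_marginalBridgeLoss_zero_le hmin hγ hc
  linarith

end MarginalBridge

section Chebyshev

variable {Ω ι : Type*} [MeasurableSpace Ω] {μ : Measure Ω} [IsFiniteMeasure μ]
  {ε : ι → Ω → ℝ} {σ : ℝ}

theorem measure_le_abs_sum_mul_le (hL2 : ∀ i, MemLp (ε i) 2 μ) (hindep : iIndepFun ε μ)
    (hmean : ∀ i, ∫ ω, ε i ω ∂μ = 0) (hvar : ∀ i, variance (ε i) μ = σ ^ 2)
    (s : Finset ι) (c : ι → ℝ) {r : ℝ} (hr : 0 < r) :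
    μ {ω | r ≤ |∑ i ∈ s, c i * ε i ω|}
      ≤ ENNReal.ofReal ((∑ i ∈ s, c i ^ 2) * σ ^ 2 / r ^ 2) := by
  set X : ι → Ω → ℝ := fun i ω => c i * ε i ω
  have hXL2 : ∀ i ∈ s, MemLp (X i) 2 μ := fun i _ => (hL2 i).const_mul (c i)
  have hX_indep : Set.Pairwise ↑s fun i j => IndepFun (X i) (X j) μ := fun i _ j _ hij =>
    (hindep.indepFun hij).comp (measurable_const_mul (c i)) (measurable_const_mul (c j))
  have hmean_sum : ∫ ω, ∑ i ∈ s, X i ω ∂μ = 0 := by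
    rw [integral_finsetSum s fun i hi => (hXL2 i hi).integrable one_le_two]
    exact Finset.sum_eq_zero fun i _ => by simp only [X, integral_const_mul, hmean, mul_zero]
  have hvar_sum : variance (∑ i ∈ s, X i) μ = (∑ i ∈ s, c i ^ 2) * σ ^ 2 := by
    rw [IndepFun.variance_sum hXL2 hX_indep, Finset.sum_mul]
    exact Finset.sum_congr rfl fun i _ => by simp only [X, variance_const_mul, hvar]
  have := meas_ge_le_variance_div_sq (memLp_finsetSum' s hXL2) hr
  simpa only [Finset.sum_apply, hmean_sum, hvar_sum, sub_zero, X] using this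

theorem measure_exists_le_abs_sum_mul_le {p : ℕ} (hL2 : ∀ i, MemLp (ε i) 2 μ)
    (hindep : iIndepFun ε μ) (hmean : ∀ i, ∫ ω, ε i ω ∂μ = 0)
    (hvar : ∀ i, variance (ε i) μ = σ ^ 2) [Fintype ι] {x : ι → Fin p → ℝ} {a : ℝ}
    (hx : ∀ j, ∑ i, x i j ^ 2 = a) (k : ℕ) {r : ℝ} (hr : 0 < r) :
    μ {ω | ∃ j : Fin p, (j : ℕ) < k ∧ r ≤ |∑ i, x i j * ε i ω|}
      ≤ k * ENNReal.ofReal (a * σ ^ 2 / r ^ 2) := by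
  set J : Finset (Fin p) := {j | (j : ℕ) < k}
  have hJ : J.card ≤ k := by
    simpa only [J, Fin.card_filter_val_lt] using min_le_right p k
  have hset : {ω | ∃ j : Fin p, (j : ℕ) < k ∧ r ≤ |∑ i, x i j * ε i ω|}
      = ⋃ j ∈ J, {ω | r ≤ |∑ i, x i j * ε i ω|} := by
    ext ω; simp [J]
  rw [hset]
  calc μ (⋃ j ∈ J, {ω | r ≤ |∑ i, x i j * ε i ω|})
      ≤ ∑ j ∈ J, μ {ω | r ≤ |∑ i, x i j * ε i ω|} := measure_biUnion_finset_le J _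
    _ ≤ ∑ _j ∈ J, ENNReal.ofReal (a * σ ^ 2 / r ^ 2) := Finset.sum_le_sum fun j _ => by
        simpa only [hx] using
          measure_le_abs_sum_mul_le hL2 hindep hmean hvar Finset.univ (x · j) hr
    _ = J.card * ENNReal.ofReal (a * σ ^ 2 / r ^ 2) := by rw [Finset.sum_const, nsmul_eq_mul]
    _ ≤ k * ENNReal.ofReal (a * σ ^ 2 / r ^ 2) := by gcongr

end Chebyshev

theorem div_rpow_le_of_one_le_mul_rpow {k n lam γ : ℝ} (hγ : γ < 2) (hk : 0 ≤ k) (hn : 1 ≤ n)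
    (h : 1 ≤ lam * n ^ (-(γ / 2)) * k ^ (γ - 2)) : (k / n) ^ (2 - γ) ≤ lam / n := by
  have hn0 : 0 < n := by linarith
  have hk0 : 0 < k := by
    rcases hk.eq_or_lt with rfl | hk0
    · rw [Real.zero_rpow (by linarith), mul_zero] at h
      linarith
    · exact hk0
  have hk_pow : k ^ (2 - γ) ≤ lam * n ^ (-(γ / 2)) := by
    have hinv : k ^ (γ - 2) * k ^ (2 - γ) = 1 := by
      rw [← Real.rpow_add hk0, sub_add_sub_cancel', sub_self, Real.rpow_zero]
    calc k ^ (2 - γ) ≤ lam * n ^ (-(γ / 2)) * k ^ (γ - 2) * k ^ (2 - γ) :=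
          le_mul_of_one_le_left (by positivity) h
      _ = lam * n ^ (-(γ / 2)) := by rw [mul_assoc, hinv, mul_one]
  have hlam : 0 ≤ lam := by
    by_contra hneg
    have : lam * n ^ (-(γ / 2)) * k ^ (γ - 2) ≤ 0 :=
      mul_nonpos_of_nonpos_of_nonneg (mul_nonpos_of_nonpos_of_nonneg (by linarith) (by positivity))
        (by positivity)
    linarith
  rw [Real.div_rpow hk hn0.le, div_le_div_iff₀ (by positivity) hn0]
  calc k ^ (2 - γ) * n ≤ lam * n ^ (-(γ / 2)) * n := by gcongr
    _ = lam * n ^ (1 - γ / 2) := by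
        rw [mul_assoc, ← Real.rpow_add_one hn0.ne']; ring_nf
    _ ≤ lam * n ^ (2 - γ) := by gcongr lam * n ^ ?_; linarith

theorem tendsto_div_zero_of_bridge_rate {k : ℕ → ℕ} {lam : ℕ → ℝ} {γ : ℝ}
    (hγ : γ < 2) (hlam : Tendsto (fun n => lam n / n) atTop (nhds 0))
    (hrate : Tendsto (fun n => lam n * (n : ℝ) ^ (-(γ / 2)) * (k n : ℝ) ^ (γ - 2))
      atTop atTop) :
    Tendsto (fun n => (k n : ℝ) / n) atTop (nhds 0) := by
  have hpow : Tendsto (fun n => ((k n : ℝ) / n) ^ (2 - γ)) atTop (nhds 0) := by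
    refine tendsto_of_tendsto_of_tendsto_of_le_of_le' tendsto_const_nhds hlam
      (Eventually.of_forall fun n => by positivity) ?_
    filter_upwards [hrate.eventually_ge_atTop 1, eventually_ge_atTop 1] with n h hn
    exact div_rpow_le_of_one_le_mul_rpow hγ (Nat.cast_nonneg _) (by exact_mod_cast hn) h
  have hroot := hpow.rpow_const (p := (2 - γ)⁻¹) (Or.inr (by simp only [inv_nonneg]; linarith))
  rw [Real.zero_rpow (by simp only [ne_eq, inv_eq_zero]; linarith)] at hroot
  refine hroot.congr fun n => ?_
  exact Real.rpow_rpow_inv (by positivity) (by linarith)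

theorem one_sub_le_toReal_measure {Ω : Type*} [MeasurableSpace Ω] {μ : Measure Ω}
    [IsProbabilityMeasure μ] {s : Set Ω} {d : ℝ} (hd : 0 ≤ d)
    (hs : μ sᶜ ≤ ENNReal.ofReal d) : 1 - d ≤ (μ s).toReal := by
  have h : (1 : ℝ≥0∞) ≤ μ s + ENNReal.ofReal d := by
    calc (1 : ℝ≥0∞) = μ Set.univ := measure_univ.symm
      _ ≤ μ s + μ sᶜ := measure_univ_le_add_compl s
      _ ≤ μ s + ENNReal.ofReal d := by gcongr
  have := ENNReal.toReal_mono (by finiteness) h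
  rw [ENNReal.toReal_one, ENNReal.toReal_add (by finiteness) ENNReal.ofReal_ne_top,
    ENNReal.toReal_ofReal hd] at this
  linarith

theorem measure_exists_zero_coord_le {Ω : Type*} [MeasurableSpace Ω] {μ : Measure Ω}
    [IsProbabilityMeasure μ] {n p k : ℕ} (hn : 0 < n) {x : Fin n → Fin p → ℝ}
    (hx : ∀ j, ∑ i, x i j ^ 2 = n) {W : Fin n → ℝ} {ε : Fin n → Ω → ℝ} {σ : ℝ}
    (hL2 : ∀ i, MemLp (ε i) 2 μ) (hindep : iIndepFun ε μ)
    (hmean : ∀ i, ∫ ω, ε i ω ∂μ = 0) (hvar : ∀ i, variance (ε i) μ = σ ^ 2)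
    {ξ0 : ℝ} (hξ0 : 0 < ξ0) (hW : ∀ j : Fin p, (j : ℕ) < k → n * ξ0 ≤ |∑ i, W i * x i j|)
    {lam γ : ℝ} (hγ : γ ≠ 0) (hlam : lam * (ξ0 / 2) ^ γ < n * ξ0 ^ 2 / 4)
    {b : Ω → Fin p → ℝ}
    (hb : ∀ᵐ ω ∂μ, ∀ β : Fin p → ℝ,
      ∑ j, marginalBridgeLoss x (fun i => W i + ε i ω) lam γ j (b ω j)
        ≤ ∑ j, marginalBridgeLoss x (fun i => W i + ε i ω) lam γ j (β j)) :
    μ {ω | ∀ j : Fin p, (j : ℕ) < k → b ω j ≠ 0}ᶜ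
      ≤ ENNReal.ofReal (4 * σ ^ 2 / ξ0 ^ 2 * (k / n)) := by
  have hr : (0 : ℝ) < n * ξ0 / 2 := by positivity
  refine (measure_mono_ae ?_).trans
    ((measure_exists_le_abs_sum_mul_le hL2 hindep hmean hvar hx k hr).trans_eq ?_)
  · filter_upwards [hb] with ω hmin hω
    have hω : ¬ ∀ j : Fin p, (j : ℕ) < k → b ω j ≠ 0 := hω
    push Not at hω
    obtain ⟨j, hj, hbj⟩ := hω
    refine ⟨j, hj, not_lt.mp fun hnoise => ?_⟩
    have hsplit : ∑ i, (W i + ε i ω) * x i j = ∑ i, W i * x i j + ∑ i, x i j * ε i ω := by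
      rw [← Finset.sum_add_distrib]
      exact Finset.sum_congr rfl fun i _ => by ring
    have hcorr : n * ξ0 / 2 < |∑ i, (W i + ε i ω) * x i j| := by
      have := abs_sub_abs_le_abs_sub (∑ i, W i * x i j) (-∑ i, x i j * ε i ω)
      rw [abs_neg, sub_neg_eq_add, ← hsplit] at this
      linarith [hW j hj]
    refine ne_zero_of_forall_sum_marginalBridgeLoss_le hmin hγ (c := ξ0 / 2) (by positivity)
      ?_ hbj
    rw [hx j]
    nlinarith
  · rw [← ENNReal.ofReal_natCast, ← ENNReal.ofReal_mul (Nat.cast_nonneg _)]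
    congr 1
    field_simp
    ring

theorem marginal_bridge_nonzero_selection_general
    {Ω : Type*} [MeasurableSpace Ω] (μ : Measure Ω) [IsProbabilityMeasure μ]
    (p k : ℕ → ℕ)
    (lam : ℕ → ℝ)
    (gamma : ℝ) (hgamma0 : 0 < gamma) (hgamma1 : gamma < 1)
    (x : (n : ℕ) → Fin n → Fin (p n) → ℝ)
    (hstd : ∀ n : ℕ, 0 < n → ∀ j, (1 / (n : ℝ)) * ∑ i, (x n i j) ^ 2 = 1)
    (β0 : (n : ℕ) → Fin (p n) → ℝ)
    -- (B1): i.i.d. errors, mean 0, variance σ², sub-Gaussian tails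
    (ε : ℕ → Ω → ℝ) (σ : ℝ) (hσ : 0 < σ)
    (hmeas : ∀ i, Measurable (ε i))
    (hindep : iIndepFun ε μ)
    (hmean : ∀ i, ∫ ω, ε i ω ∂μ = 0)
    (hvar : ∀ i, variance (ε i) μ = σ ^ 2)
    -- ξₙⱼ = n⁻¹ ∑ᵢ (wᵢ'β₁₀) x_{ij}
    (ξ : (n : ℕ) → Fin (p n) → ℝ)
    (hξ : ∀ n (j : Fin (p n)), ξ n j
      = (n : ℝ)⁻¹ * ∑ i : Fin n, (∑ a, x n i a * β0 n a) * x n i j)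
    -- (B2)(b)
    (ξ0 : ℝ) (hξ0 : 0 < ξ0)
    (hB2b : ∀ n (j : Fin (p n)), (j : ℕ) < k n → ξ0 ≤ |ξ n j|)
    -- (B3)(a)
    (hB3a1 : Tendsto (fun n => lam n / (n : ℝ)) atTop (nhds 0))
    (hB3a2 : Tendsto (fun n => lam n * (n : ℝ) ^ (-(gamma / 2))
        * (k n : ℝ) ^ (gamma - 2)) atTop atTop)
    -- the marginal bridge estimator
    (βtil : (n : ℕ) → Ω → Fin (p n) → ℝ)
    (hβmin : ∀ n, ∀ᵐ ω ∂μ, ∀ β : Fin (p n) → ℝ,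
      (∑ j, ∑ i : Fin n,
          ((∑ a, x n i a * β0 n a) + ε i ω - x n i j * βtil n ω j) ^ 2
          + lam n * ∑ j, |βtil n ω j| ^ gamma)
        ≤ ∑ j, ∑ i : Fin n,
            ((∑ a, x n i a * β0 n a) + ε i ω - x n i j * β j) ^ 2
          + lam n * ∑ j, |β j| ^ gamma) :
    Tendsto (fun n =>
        (μ {ω | ∀ j : Fin (p n), (j : ℕ) < k n → βtil n ω j ≠ 0}).toReal)
      atTop (nhds 1) := by
  have hL2 : ∀ i, MemLp (ε i) 2 μ := fun i =>
    memLp_two_of_variance_ne_zero (hmeas i).aestronglyMeasurable (by rw [hvar i]; positivity)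
  have hbound : Tendsto (fun n => 1 - 4 * σ ^ 2 / ξ0 ^ 2 * ((k n : ℝ) / n)) atTop (nhds 1) := by
    simpa using ((tendsto_div_zero_of_bridge_rate (by linarith) hB3a1
      hB3a2).const_mul (4 * σ ^ 2 / ξ0 ^ 2)).const_sub 1
  have hlam_small : ∀ᶠ n : ℕ in atTop, lam n * (ξ0 / 2) ^ gamma < n * ξ0 ^ 2 / 4 := by
    filter_upwards [hB3a1.eventually_lt_const (by positivity : 0 < ξ0 ^ 2 / 4 / (ξ0 / 2) ^ gamma),
      eventually_gt_atTop 0] with n hlt hn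
    rw [div_lt_div_iff₀ (by positivity) (by positivity)] at hlt
    linarith
  refine tendsto_of_tendsto_of_tendsto_of_le_of_le' hbound tendsto_const_nhds ?_
    (Eventually.of_forall fun _ => measureReal_le_one)
  filter_upwards [eventually_gt_atTop 0, hlam_small] with n hn hlam_n
  have hx : ∀ j, ∑ i, x n i j ^ 2 = n := fun j => by
    have := hstd n hn j; field_simp at this; exact this
  have hsignal : ∀ j : Fin (p n), (j : ℕ) < k n →
      n * ξ0 ≤ |∑ i, (∑ a, x n i a * β0 n a) * x n i j| := fun j hj => by
    rw [← mul_inv_cancel_left₀ (Nat.cast_ne_zero.mpr hn.ne') (∑ i, _ * _), ← hξ, abs_mul,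
      Nat.abs_cast]
    exact mul_le_mul_of_nonneg_left (hB2b n j hj) (Nat.cast_nonneg _)
  refine one_sub_le_toReal_measure (by positivity) (measure_exists_zero_coord_le hn hx
    (fun i => hL2 i) (hindep.precomp Fin.val_injective) (fun i => hmean i) (fun i => hvar i)
    hξ0 hsignal hgamma0.ne' hlam_n ?_)
  simpa only [sum_marginalBridgeLoss] using hβmin n

/-- Theorem 3 (nonzero-coefficient part). Under the partial-orthogonality
conditions (B1)–(B4) and bridge exponent `0 < γ < 1`, the marginal bridge
estimator, the global minimizer of
`Uₙ(β) = ∑ⱼ∑ᵢ (Yᵢ − x_{ij}βⱼ)² + λₙ ∑ⱼ |βⱼ|^γ`, is nonzero on every coordinate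
`j ∈ Kₙ = {1, …, kₙ}` of the nonzero coefficients with probability converging
to one. -/
theorem marginal_bridge_nonzero_selection
    {Ω : Type*} [MeasurableSpace Ω] (μ : Measure Ω) [IsProbabilityMeasure μ]
    (p k : ℕ → ℕ) (hkp : ∀ n, k n ≤ p n)
    (lam : ℕ → ℝ) (hlam : ∀ n, 0 ≤ lam n)
    (gamma : ℝ) (hgamma0 : 0 < gamma) (hgamma1 : gamma < 1)
    (x : (n : ℕ) → Fin n → Fin (p n) → ℝ)
    (hstd : ∀ n : ℕ, 0 < n → ∀ j, (1 / (n : ℝ)) * ∑ i, (x n i j) ^ 2 = 1)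
    (β0 : (n : ℕ) → Fin (p n) → ℝ)
    (hβ0nz : ∀ n (j : Fin (p n)), (j : ℕ) < k n → β0 n j ≠ 0)
    (hβ0z : ∀ n (j : Fin (p n)), k n ≤ (j : ℕ) → β0 n j = 0)
    -- (B1): i.i.d. errors, mean 0, variance σ², sub-Gaussian tails
    (ε : ℕ → Ω → ℝ) (σ : ℝ) (hσ : 0 < σ)
    (hmeas : ∀ i, Measurable (ε i))
    (hindep : iIndepFun ε μ)
    (hident : ∀ i j, IdentDistrib (ε i) (ε j) μ μ)
    (hmean : ∀ i, ∫ ω, ε i ω ∂μ = 0)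
    (hvar : ∀ i, variance (ε i) μ = σ ^ 2)
    (K C : ℝ) (hK : 0 < K) (hC : 0 < C)
    (hsubg : ∀ i, ∀ t : ℝ, 0 < t →
      (μ {ω | t < |ε i ω|}).toReal ≤ K * Real.exp (-C * t ^ 2))
    -- ξₙⱼ = n⁻¹ ∑ᵢ (wᵢ'β₁₀) x_{ij}
    (ξ : (n : ℕ) → Fin (p n) → ℝ)
    (hξ : ∀ n (j : Fin (p n)), ξ n j
      = (n : ℝ)⁻¹ * ∑ i : Fin n, (∑ a, x n i a * β0 n a) * x n i j)
    -- (B2)(a): partial orthogonality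
    (c0 : ℝ) (hc0 : 0 < c0)
    (hB2a : ∀ᶠ n : ℕ in atTop, ∀ (j l : Fin (p n)), k n ≤ (j : ℕ) → (l : ℕ) < k n →
      |(Real.sqrt (n : ℝ))⁻¹ * ∑ i : Fin n, x n i j * x n i l| ≤ c0)
    -- (B2)(b)
    (ξ0 : ℝ) (hξ0 : 0 < ξ0)
    (hB2b : ∀ n (j : Fin (p n)), (j : ℕ) < k n → ξ0 ≤ |ξ n j|)
    -- (B3)(a)
    (hB3a1 : Tendsto (fun n => lam n / (n : ℝ)) atTop (nhds 0))
    (hB3a2 : Tendsto (fun n => lam n * (n : ℝ) ^ (-(gamma / 2))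
        * (k n : ℝ) ^ (gamma - 2)) atTop atTop)
    -- (B3)(b): log(mₙ) = o((λₙ n^{-γ/2})^{2/(2-γ)})
    (hB3b : Tendsto (fun n => Real.log ((p n - k n : ℕ) : ℝ)
        / (lam n * (n : ℝ) ^ (-(gamma / 2))) ^ ((2 : ℝ) / (2 - gamma)))
      atTop (nhds 0))
    -- (B4)
    (b1 : ℝ) (hb1 : 0 < b1)
    (hB4 : ∀ n (j : Fin (p n)), (j : ℕ) < k n → |β0 n j| ≤ b1)
    -- the marginal bridge estimator
    (βtil : (n : ℕ) → Ω → Fin (p n) → ℝ)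
    (hβmeas : ∀ n, Measurable (βtil n))
    (hβmin : ∀ n, ∀ᵐ ω ∂μ, ∀ β : Fin (p n) → ℝ,
      (∑ j, ∑ i : Fin n,
          ((∑ a, x n i a * β0 n a) + ε i ω - x n i j * βtil n ω j) ^ 2
          + lam n * ∑ j, |βtil n ω j| ^ gamma)
        ≤ ∑ j, ∑ i : Fin n,
            ((∑ a, x n i a * β0 n a) + ε i ω - x n i j * β j) ^ 2
          + lam n * ∑ j, |β j| ^ gamma) :
    Tendsto (fun n =>
        (μ {ω | ∀ j : Fin (p n), (j : ℕ) < k n → βtil n ω j ≠ 0}).toReal)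
      atTop (nhds 1) :=
  marginal_bridge_nonzero_selection_general μ p k lam gamma hgamma0 hgamma1 x hstd β0 ε σ hσ hmeas
    hindep hmean hvar ξ hξ ξ0 hξ0 hB2b hB3a1 hB3a2 βtil hβmin
end
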